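/- arXiv:2004.02244 — 4 statements merged into one kernel-verified Lean document; each statement's English description precedes it below -/
import Mathlib

section
/- For r ≥ 2 and any (a,b) ∈ ℝ × ℝ, the gradient ∇φ_r(a,b) = (a_+^{r-1} b_+^r − (-a)_+^{r-1}, a_+^r b_+^{r-1} − (-b)_+^{r-1}) vanishes if and only if φ_r(a,b) = 0. -/
/-! Both conditions cut out the same set `{min a b = 0}`. Each term of `φ_r` is a nonnegative power
of a positive part, so `φ_r` vanishes exactly when `(-a)_+ = (-b)_+ = 0` and `a_+ b_+ = 0`. In each
gradient component the subtracted term `(-a)_+^{r-1}` is positive when `a < 0` while the product then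
vanishes, so the component forces `a ≥ 0`, after which it reduces to `a_+^{r-1} b_+^r = 0`. -/

noncomputable def phi (r a b : ℝ) : ℝ :=
  (1 / r) * ((max a 0) ^ r * (max b 0) ^ r + (max (-a) 0) ^ r + (max (-b) 0) ^ r)

lemma min_eq_zero_iff {a b : ℝ} : min a b = 0 ↔ 0 ≤ a ∧ 0 ≤ b ∧ (a ≤ 0 ∨ b ≤ 0) := by
  rcases le_total a b with h | h
  · rw [min_eq_left h]
    constructor
    · rintro rfl; exact ⟨le_rfl, h, Or.inl le_rfl⟩
    · rintro ⟨ha, -, ha' | hb'⟩ <;> linarith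
  · rw [min_eq_right h]
    constructor
    · rintro rfl; exact ⟨h, le_rfl, Or.inr le_rfl⟩
    · rintro ⟨-, hb, ha' | hb'⟩ <;> linarith

lemma max_zero_rpow_nonneg (x s : ℝ) : 0 ≤ max x 0 ^ s :=
  Real.rpow_nonneg (le_max_right _ _) _

lemma max_zero_rpow_eq_zero_iff {x s : ℝ} (hs : s ≠ 0) : max x 0 ^ s = 0 ↔ x ≤ 0 := by
  rw [Real.rpow_eq_zero (le_max_right _ _) hs, max_eq_right_iff]

lemma max_zero_rpow_mul_sub_eq_zero_iff {x y p q : ℝ} (hp : p ≠ 0) (hq : q ≠ 0) :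
    max x 0 ^ p * max y 0 ^ q - max (-x) 0 ^ p = 0 ↔ 0 ≤ x ∧ (x ≤ 0 ∨ y ≤ 0) := by
  rcases le_or_gt 0 x with hx | hx
  · rw [(max_zero_rpow_eq_zero_iff hp).2 (neg_nonpos.2 hx), sub_zero, mul_eq_zero,
      max_zero_rpow_eq_zero_iff hp, max_zero_rpow_eq_zero_iff hq]
    exact ⟨fun h => ⟨hx, h⟩, And.right⟩
  · have hneg : 0 < max (-x) 0 ^ p := Real.rpow_pos_of_pos (lt_max_of_lt_left (neg_pos.2 hx)) _
    rw [max_eq_right hx.le, Real.zero_rpow hp, zero_mul]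
    constructor
    · intro h; linarith
    · intro h; linarith [h.1]

lemma phi_eq_zero_iff {r : ℝ} (hr : 0 < r) (a b : ℝ) : phi r a b = 0 ↔ min a b = 0 := by
  have hprod_nonneg : 0 ≤ max a 0 ^ r * max b 0 ^ r :=
    mul_nonneg (max_zero_rpow_nonneg _ _) (max_zero_rpow_nonneg _ _)
  rw [phi, mul_eq_zero, or_iff_right (by positivity),
    add_eq_zero_iff_of_nonneg (add_nonneg hprod_nonneg (max_zero_rpow_nonneg _ _))
      (max_zero_rpow_nonneg _ _),
    add_eq_zero_iff_of_nonneg hprod_nonneg (max_zero_rpow_nonneg _ _), mul_eq_zero,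
    max_zero_rpow_eq_zero_iff hr.ne', max_zero_rpow_eq_zero_iff hr.ne',
    max_zero_rpow_eq_zero_iff hr.ne', max_zero_rpow_eq_zero_iff hr.ne', neg_nonpos, neg_nonpos,
    min_eq_zero_iff]
  tauto

lemma gradient_phi_eq_zero_iff {r : ℝ} (hr : 1 < r) (a b : ℝ) :
    ((max a 0) ^ (r - 1) * (max b 0) ^ r - (max (-a) 0) ^ (r - 1) = 0 ∧
     (max a 0) ^ r * (max b 0) ^ (r - 1) - (max (-b) 0) ^ (r - 1) = 0) ↔ min a b = 0 := by
  have hr₀ : r ≠ 0 := by positivity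
  have hr₁ : r - 1 ≠ 0 := sub_ne_zero.2 hr.ne'
  rw [mul_comm (max a 0 ^ r), max_zero_rpow_mul_sub_eq_zero_iff hr₁ hr₀,
    max_zero_rpow_mul_sub_eq_zero_iff hr₁ hr₀, min_eq_zero_iff]
  tauto

theorem stmt_3 (r : ℝ) (hr : 2 ≤ r) (a b : ℝ) :
    ((max a 0) ^ (r - 1) * (max b 0) ^ r - (max (-a) 0) ^ (r - 1) = 0 ∧
     (max a 0) ^ r * (max b 0) ^ (r - 1) - (max (-b) 0) ^ (r - 1) = 0)
    ↔ phi r a b = 0 := by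
  rw [gradient_phi_eq_zero_iff (by linarith) a b, phi_eq_zero_iff (by linarith) a b]
end

section
/- A matrix A ∈ ℝ^{n×n} is a P-matrix (all principal minors positive) if and only if for every nonzero x ∈ ℝⁿ there exists an index i with x_i (Ax)_i > 0. -/
open Matrix

/-- A P-matrix: all principal minors are positive. -/
def IsPMatrix {m : Type*} [Fintype m] [DecidableEq m] (A : Matrix m m ℝ) : Prop :=
  ∀ T : Finset m, T.Nonempty →
    0 < (A.submatrix (fun i : T => (i : m)) (fun i : T => (i : m))).det

/-- A P_s-matrix: all principal minors of order up to `s` are positive. -/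
def IsPsMatrix {m : Type*} [Fintype m] [DecidableEq m] (s : ℕ) (A : Matrix m m ℝ) : Prop :=
  ∀ T : Finset m, T.Nonempty → T.card ≤ s →
    0 < (A.submatrix (fun i : T => (i : m)) (fun i : T => (i : m))).det

/-!
If `x i * (A *ᵥ x) i ≤ 0` for all `i` and `x` has no zero entry, then `A + D` kills `x` for the
nonnegative diagonal matrix `D = diag (-(A *ᵥ x) i / x i)`. For a P-matrix, however,
`det (A + D)` is the sum of the principal minors of `A` weighted by products of entries of `D`,
hence positive. A general `x` is handled on its support, where `A` is again a P-matrix.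

Conversely, sign-nonreversal passes to principal submatrices, and it keeps every
`(1 - t) • 1 + t • A` with `t ∈ [0, 1]` nonsingular, so `det A` has the sign of `det 1 = 1`.
-/

namespace Matrix

theorem mulVec_submatrix_coe_apply {k l m R : Type*} [Fintype m] [NonUnitalNonAssocSemiring R]
    (A : Matrix l m R) (f : k → l) (T : Finset m) {x : m → R} (hx : ∀ j ∉ T, x j = 0) (i : k) :
    (A.submatrix f ((↑) : T → m) *ᵥ fun j : T => x j) i = (A *ᵥ x) (f i) := by
  simp only [mulVec, dotProduct, submatrix_apply]
  rw [Finset.sum_coe_sort T fun j => A (f i) j * x j]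
  exact Finset.sum_subset (Finset.subset_univ T) fun j _ hj => by rw [hx j hj, mul_zero]

variable {m : Type*} [Fintype m] [DecidableEq m]

theorem det_add_diagonal_eq_sum {R : Type*} [CommRing R] (A : Matrix m m R) (d : m → R) :
    (A + diagonal d).det =
      ∑ s : Finset m, (∏ i ∈ sᶜ, d i) * (A.submatrix ((↑) : s → m) (↑)).det := by
  have hrows : (A + diagonal d).row = A.row + fun i => d i • (1 : Matrix m m R).row i := by
    ext i j
    rw [Pi.add_apply, Pi.add_apply]
    by_cases h : i = j <;> simp [row, one_apply, h]
  change detRowAlternating (A + diagonal d).row = _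
  rw [hrows, AlternatingMap.map_add_univ]
  refine Finset.sum_congr rfl fun s _ => ?_
  have hscale : s.piecewise A.row (fun i => d i • (1 : Matrix m m R).row i) =
      fun i => (if i ∈ s then 1 else d i) • s.piecewise A.row (1 : Matrix m m R).row i := by
    ext i j
    by_cases h : i ∈ s <;> simp [h]
  rw [hscale, AlternatingMap.map_smul_univ, Finset.prod_ite, Finset.prod_const_one, one_mul,
    smul_eq_mul, Finset.filter_notMem_eq_sdiff, ← Finset.compl_eq_univ_sdiff]
  exact congrArg _ (det_piecewise_one_eq_submatrix_det A s)

def NotSignReversing (A : Matrix m m ℝ) : Prop :=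
  ∀ x : m → ℝ, x ≠ 0 → ∃ i, 0 < x i * (A *ᵥ x) i

namespace NotSignReversing

variable {A : Matrix m m ℝ}

theorem submatrix_coe (hA : NotSignReversing A) (T : Finset m) :
    NotSignReversing (A.submatrix ((↑) : T → m) (↑)) := by
  intro y hy
  set x : m → ℝ := fun j => if h : j ∈ T then y ⟨j, h⟩ else 0
  have hx_off : ∀ j ∉ T, x j = 0 := fun j hj => dif_neg hj
  have hxy : (fun j : T => x j) = y := funext fun j => dif_pos j.2
  have hx : x ≠ 0 := fun h0 => hy (by rw [← hxy, h0]; rfl)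
  obtain ⟨j, hj⟩ := hA x hx
  have hjT : j ∈ T := by
    by_contra hjT
    simp [hx_off j hjT] at hj
  refine ⟨⟨j, hjT⟩, ?_⟩
  rw [← hxy, mulVec_submatrix_coe_apply A _ T hx_off]
  exact hj

theorem det_ne_zero (hA : NotSignReversing A) : A.det ≠ 0 := by
  intro h0
  obtain ⟨v, hv, hAv⟩ := exists_mulVec_eq_zero_iff.mpr h0
  obtain ⟨i, hi⟩ := hA v hv
  rw [hAv, Pi.zero_apply, mul_zero] at hi
  exact lt_irrefl 0 hi

theorem one_sub_smul_one_add_smul (hA : NotSignReversing A) {t : ℝ}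
    (ht : t ∈ Set.Icc (0 : ℝ) 1) :
    NotSignReversing ((1 - t) • (1 : Matrix m m ℝ) + t • A) := by
  intro x hx
  obtain ⟨i, hi⟩ := hA x hx
  refine ⟨i, ?_⟩
  have hxi : 0 < x i * x i := mul_self_pos.mpr (left_ne_zero_of_mul hi.ne')
  have hexpand : x i * (((1 - t) • (1 : Matrix m m ℝ) + t • A) *ᵥ x) i =
      (1 - t) * (x i * x i) + t * (x i * (A *ᵥ x) i) := by
    simp only [add_mulVec, smul_mulVec, one_mulVec, Pi.add_apply, Pi.smul_apply, smul_eq_mul]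
    ring
  rw [hexpand]
  rcases ht.1.eq_or_lt with rfl | ht0
  · simpa using hxi
  · nlinarith [mul_pos ht0 hi, mul_nonneg (sub_nonneg.2 ht.2) hxi.le]

theorem det_pos (hA : NotSignReversing A) : 0 < A.det := by
  set f : ℝ → ℝ := fun t => ((1 - t) • (1 : Matrix m m ℝ) + t • A).det
  have hf : Continuous f := by fun_prop
  have hf0 : f 0 = 1 := by simp [f]
  have hf1 : f 1 = A.det := by simp [f]
  by_contra hneg
  obtain ⟨t, ht, hft⟩ : ∃ t ∈ Set.Icc (0 : ℝ) 1, f t = 0 :=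
    intermediate_value_Icc' zero_le_one hf.continuousOn
      ⟨hf1 ▸ not_lt.mp hneg, hf0 ▸ zero_le_one⟩
  exact (hA.one_sub_smul_one_add_smul ht).det_ne_zero hft

end NotSignReversing

end Matrix

namespace IsPMatrix

variable {m : Type*} [Fintype m] [DecidableEq m] {A : Matrix m m ℝ}

theorem det_submatrix_pos (hA : IsPMatrix A) (s : Finset m) :
    0 < (A.submatrix ((↑) : s → m) (↑)).det := by
  rcases s.eq_empty_or_nonempty with rfl | hs
  · simp
  · exact hA s hs

theorem submatrix_coe (hA : IsPMatrix A) (S : Finset m) :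
    IsPMatrix (A.submatrix ((↑) : S → m) (↑)) := by
  intro s _
  let e := s.equivMap (Function.Embedding.subtype (· ∈ S))
  have hre : (A.submatrix ((↑) : S → m) (↑)).submatrix Subtype.val Subtype.val =
      (A.submatrix (Subtype.val : _ → m) Subtype.val).submatrix e e :=
    rfl
  rw [hre, det_submatrix_equiv_self]
  exact hA.det_submatrix_pos _

theorem det_add_diagonal_pos (hA : IsPMatrix A) {d : m → ℝ} (hd : 0 ≤ d) :
    0 < (A + diagonal d).det := by
  rw [det_add_diagonal_eq_sum]
  refine Finset.sum_pos' (fun s _ => ?_) ⟨Finset.univ, Finset.mem_univ _, ?_⟩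
  · exact mul_nonneg (Finset.prod_nonneg fun i _ => hd i) (hA.det_submatrix_pos s).le
  · rw [Finset.compl_univ, Finset.prod_empty, one_mul]
    exact hA.det_submatrix_pos _

theorem exists_pos_mul_mulVec [Nonempty m] (hA : IsPMatrix A) {x : m → ℝ}
    (hx : ∀ i, x i ≠ 0) : ∃ i, 0 < x i * (A *ᵥ x) i := by
  by_contra! hle
  set d : m → ℝ := fun i => -(x i * (A *ᵥ x) i) / (x i * x i)
  have hd : 0 ≤ d := fun i => div_nonneg (neg_nonneg.2 (hle i)) (mul_self_nonneg _)
  have hker : (A + diagonal d) *ᵥ x = 0 := by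
    ext i
    have hdi : d i * x i = -(A *ᵥ x) i := by
      dsimp only [d]
      field_simp [hx i]
    simp [add_mulVec, mulVec_diagonal, hdi]
  have hx0 : x ≠ 0 := fun h => hx (Classical.arbitrary m) (congrFun h _)
  exact (hA.det_add_diagonal_pos hd).ne' (exists_mulVec_eq_zero_iff.mp ⟨x, hx0, hker⟩)

theorem notSignReversing (hA : IsPMatrix A) : NotSignReversing A := by
  intro x hx
  set S := Finset.univ.filter (x · ≠ 0)
  obtain ⟨i₀, hi₀⟩ := Function.ne_iff.mp hx
  have : Nonempty S := ⟨⟨i₀, by simpa [S] using hi₀⟩⟩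
  have hx_off : ∀ j ∉ S, x j = 0 := by simp [S]
  obtain ⟨i, hi⟩ := (hA.submatrix_coe S).exists_pos_mul_mulVec (x := fun j : S => x j)
    fun j => (Finset.mem_filter.1 j.2).2
  exact ⟨i, by rwa [mulVec_submatrix_coe_apply A _ S hx_off] at hi⟩

end IsPMatrix

theorem stmt_8 {n : ℕ} (A : Matrix (Fin n) (Fin n) ℝ) :
    IsPMatrix A ↔ ∀ x : Fin n → ℝ, x ≠ 0 → ∃ i, 0 < x i * A.mulVec x i :=
  ⟨IsPMatrix.notSignReversing, fun hA T _ => (NotSignReversing.submatrix_coe hA T).det_pos⟩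
end

section
/- If M ∈ ℝ^{n×n} is positive semidefinite, the feasible set fea(M,q) = {x : x ≥ 0, Mx + q ≥ 0} is nonempty, then the set of stationary points {x : ∇f_r(x) = 0} of the merit function f_r equals the solution set sol(M,q), and both are nonempty. -/
open Matrix

/-- The merit function `f_r(x) = Σᵢ φ_r(xᵢ, (Mx+q)ᵢ)`. -/
noncomputable def fr {n : ℕ} (r : ℝ) (M : Matrix (Fin n) (Fin n) ℝ) (q : Fin n → ℝ)
    (x : Fin n → ℝ) : ℝ :=
  ∑ i, phi r (x i) (M.mulVec x i + q i)

/-- The solution set of the LCP. -/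
def solSet {n : ℕ} (M : Matrix (Fin n) (Fin n) ℝ) (q : Fin n → ℝ) : Set (Fin n → ℝ) :=
  {x | (∀ i, 0 ≤ x i) ∧ (∀ i, 0 ≤ M.mulVec x i + q i) ∧
       ∑ i, x i * (M.mulVec x i + q i) = 0}

/-- The number of nonzero entries of a vector. -/
noncomputable def zeroNorm {n : ℕ} (x : Fin n → ℝ) : ℕ :=
  (Finset.univ.filter (fun i => x i ≠ 0)).card

/-- The feasible set of the LCP. -/
def feaSet {n : ℕ} (M : Matrix (Fin n) (Fin n) ℝ) (q : Fin n → ℝ) : Set (Fin n → ℝ) :=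
  {x | (∀ i, 0 ≤ x i) ∧ (∀ i, 0 ≤ M.mulVec x i + q i)}

/-!
Write `s = ∂₁φ_r` and `t = ∂₂φ_r` at `(xᵢ, (Mx + q)ᵢ)`, so that `∇f_r(x) = s + Mᵀ t`. Always
`sᵢ tᵢ ≥ 0`, with equality only when `xᵢ` and `(Mx + q)ᵢ` are not both positive, and then
`sᵢ = -(xᵢ⁻)^(r-1)`, `tᵢ = -((Mx + q)ᵢ⁻)^(r-1)`. At a stationary point, pairing the gradient
with `t` gives `s ⬝ t + tᵀ M t = 0`, hence `sᵢ tᵢ = 0`; pairing it with `x̄ - x` for a feasible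
`x̄` gives `∑ (xᵢ⁻)^r + ((Mx + q)ᵢ⁻)^r = x̄ ⬝ s + (Mx̄ + q) ⬝ t ≤ 0`, so `x` solves the LCP.

For existence, the regularized problems `LCP(M + εI, q - εx̄)` are strongly monotone, hence
solvable by the contraction `y ↦ [y - γ((M + εI) y + q - εx̄)]₊`, and their solutions
satisfy `ε ‖y - x̄‖² ≤ x̄ ⬝ (Mx̄ + q)`. Along an ultrafilter the support of the solutions is a
fixed set `S`; the linear system `(Mz + q)_S = 0` is then exactly solvable, since the range of a
linear map is closed, and its solution bounds the regularized solutions. Their limit as `ε → 0`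
solves the LCP.
-/

open Matrix Filter Topology Asymptotics

section Scalar

variable {r : ℝ}

lemma hasDerivAt_max_zero_rpow (hr : 1 < r) (a : ℝ) :
    HasDerivAt (fun y : ℝ => max y 0 ^ r) (r * max a 0 ^ (r - 1)) a := by
  have hr0 : r ≠ 0 := by positivity
  have hr1 : r - 1 ≠ 0 := by linarith
  rcases lt_trichotomy a 0 with ha | rfl | ha
  · have hloc : (fun y : ℝ => max y 0 ^ r) =ᶠ[𝓝 a] fun _ => 0 := by
      filter_upwards [eventually_lt_nhds ha] with y hy
      rw [max_eq_right hy.le, Real.zero_rpow hr0]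
    rw [max_eq_right ha.le, Real.zero_rpow hr1, mul_zero]
    exact (hasDerivAt_const a 0).congr_of_eventuallyEq hloc
  · -- `(max y 0) ^ r` is dominated by `|y| ^ r`, whose derivative at `0` vanishes
    have habs := hasDerivAt_iff_isLittleO.mp (hasDerivAt_abs_rpow 0 hr)
    simp only [abs_zero, Real.zero_rpow hr0, mul_zero, smul_zero, sub_zero] at habs
    rw [hasDerivAt_iff_isLittleO]
    simp only [max_self, Real.zero_rpow hr0, Real.zero_rpow hr1, mul_zero, smul_zero, sub_zero]
    refine IsBigO.trans_isLittleO (IsBigO.of_bound 1 (Eventually.of_forall fun y => ?_)) habs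
    rw [one_mul, Real.norm_eq_abs, Real.norm_eq_abs, abs_of_nonneg (by positivity),
      abs_of_nonneg (by positivity)]
    exact Real.rpow_le_rpow (le_max_right _ _) (max_le (le_abs_self y) (abs_nonneg y))
      (by linarith)
  · have hloc : (fun y : ℝ => max y 0 ^ r) =ᶠ[𝓝 a] fun y => y ^ r := by
      filter_upwards [eventually_gt_nhds ha] with y hy
      rw [max_eq_left hy.le]
    rw [max_eq_left ha.le]
    exact (Real.hasDerivAt_rpow_const (Or.inl ha.ne')).congr_of_eventuallyEq hloc

/-- `∂φ_r/∂a (a, b)`; since `φ_r` is symmetric, `∂φ_r/∂b (a, b) = dphi r b a`. -/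
noncomputable def dphi (r a b : ℝ) : ℝ :=
  max a 0 ^ (r - 1) * max b 0 ^ r - max (-a) 0 ^ (r - 1)

lemma HasFDerivAt.phi {E : Type*} [NormedAddCommGroup E] [NormedSpace ℝ E] (hr : 1 < r)
    {u v : E → ℝ} {u' v' : E →L[ℝ] ℝ} {x : E} (hu : HasFDerivAt u u' x)
    (hv : HasFDerivAt v v' x) :
    HasFDerivAt (fun y => phi r (u y) (v y))
      (dphi r (u x) (v x) • u' + dphi r (v x) (u x) • v') x := by
  have hpos := fun {w : E → ℝ} {w' : E →L[ℝ] ℝ} (hw : HasFDerivAt w w' x) =>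
    (hasDerivAt_max_zero_rpow hr (w x)).comp_hasFDerivAt x hw
  have hsum := (((hpos hu).mul (hpos hv)).add (hpos hu.neg)).add (hpos hv.neg) |>.const_mul (1 / r)
  refine hsum.congr_fderiv ?_
  ext h
  simp only [dphi, _root_.add_apply, _root_.smul_apply, _root_.neg_apply, smul_eq_mul,
    Pi.neg_apply, Function.comp_apply]
  field_simp
  ring

lemma dphi_pos (hr : 1 < r) {a b : ℝ} (ha : 0 < a) (hb : 0 < b) : 0 < dphi r a b := by
  rw [dphi, max_eq_left ha.le, max_eq_left hb.le, max_eq_right (by linarith : -a ≤ 0),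
    Real.zero_rpow (by linarith), sub_zero]
  positivity

lemma dphi_of_nonpos (hr : 1 < r) {a b : ℝ} (h : a ≤ 0 ∨ b ≤ 0) :
    dphi r a b = -max (-a) 0 ^ (r - 1) := by
  have hprod : max a 0 ^ (r - 1) * max b 0 ^ r = 0 := by
    rcases h with h | h
    · rw [max_eq_right h, Real.zero_rpow (by linarith), zero_mul]
    · rw [max_eq_right h, Real.zero_rpow (by linarith), mul_zero]
  rw [dphi, hprod, zero_sub]

lemma dphi_mul_dphi_nonneg (hr : 1 < r) (a b : ℝ) : 0 ≤ dphi r a b * dphi r b a := by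
  by_cases h : 0 < a ∧ 0 < b
  · exact (mul_pos (dphi_pos hr h.1 h.2) (dphi_pos hr h.2 h.1)).le
  · have h' : a ≤ 0 ∨ b ≤ 0 := by contrapose! h; exact h
    rw [dphi_of_nonpos hr h', dphi_of_nonpos hr h'.symm, neg_mul_neg]
    positivity

lemma nonpos_or_nonpos_of_dphi_mul_dphi_eq_zero (hr : 1 < r) {a b : ℝ}
    (h : dphi r a b * dphi r b a = 0) : a ≤ 0 ∨ b ≤ 0 := by
  by_contra! hab
  exact (mul_pos (dphi_pos hr hab.1 hab.2) (dphi_pos hr hab.2 hab.1)).ne' h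

lemma mul_neg_max_neg_rpow (hr : 1 < r) (a : ℝ) :
    a * -max (-a) 0 ^ (r - 1) = max (-a) 0 ^ r := by
  rcases le_or_gt 0 a with ha | ha
  · rw [max_eq_right (by linarith), Real.zero_rpow (by linarith), Real.zero_rpow (by linarith)]
    ring
  · rw [max_eq_left (by linarith), ← neg_mul_neg, neg_neg, ← Real.rpow_one_add' (by linarith)
      (by linarith)]
    ring_nf

lemma max_neg_rpow_eq_zero_iff (hr : r ≠ 0) (a : ℝ) : max (-a) 0 ^ r = 0 ↔ 0 ≤ a := by
  rw [Real.rpow_eq_zero_iff_of_nonneg (le_max_right _ _), max_eq_right_iff, neg_nonpos]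
  exact ⟨fun h => h.1, fun h => ⟨h, hr⟩⟩

end Scalar

section Gradient

variable {n : ℕ} {r : ℝ} {M : Matrix (Fin n) (Fin n) ℝ} {q : Fin n → ℝ}

noncomputable def frGrad (r : ℝ) (M : Matrix (Fin n) (Fin n) ℝ) (q x : Fin n → ℝ) : Fin n → ℝ :=
  (fun i => dphi r (x i) ((M *ᵥ x + q) i)) + (fun i => dphi r ((M *ᵥ x + q) i) (x i)) ᵥ* M

lemma fderiv_fr_apply (hr : 1 < r) (x h : Fin n → ℝ) :
    fderiv ℝ (fr r M q) x h = frGrad r M q x ⬝ᵥ h := by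
  let proj (i : Fin n) : (Fin n → ℝ) →L[ℝ] ℝ := ContinuousLinearMap.proj i
  let row (i : Fin n) : (Fin n → ℝ) →L[ℝ] ℝ := (proj i).comp M.mulVecLin.toContinuousLinearMap
  have hterm (i : Fin n) := HasFDerivAt.phi hr (proj i).hasFDerivAt
    ((row i).hasFDerivAt.add_const (q i)) (x := x)
  have hfr : HasFDerivAt (fr r M q) _ x := HasFDerivAt.fun_sum fun i _ => hterm i
  rw [hfr.fderiv, frGrad, add_dotProduct, ← dotProduct_mulVec, dotProduct, dotProduct,
    ← Finset.sum_add_distrib, _root_.sum_apply]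
  rfl

lemma fderiv_fr_eq_zero_iff (hr : 1 < r) (x : Fin n → ℝ) :
    fderiv ℝ (fr r M q) x = 0 ↔ frGrad r M q x = 0 := by
  refine ⟨fun h => funext fun j => ?_, fun h => ContinuousLinearMap.ext fun y => ?_⟩
  · have hj := fderiv_fr_apply (M := M) (q := q) hr x (Pi.single j 1)
    rw [h, dotProduct_single, mul_one] at hj
    exact hj.symm
  · rw [fderiv_fr_apply hr, h, zero_dotProduct, _root_.zero_apply]

lemma frGrad_eq_zero_of_mem_solSet (hr : 1 < r) {x : Fin n → ℝ} (hx : x ∈ solSet M q) :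
    frGrad r M q x = 0 := by
  obtain ⟨hx, hv, hxv⟩ := hx
  have hcompl (i : Fin n) : x i * (M *ᵥ x + q) i = 0 :=
    (Finset.sum_eq_zero_iff_of_nonneg fun j _ => mul_nonneg (hx j) (hv j)).mp hxv i
      (Finset.mem_univ i)
  have hsplit (i : Fin n) : x i ≤ 0 ∨ (M *ᵥ x + q) i ≤ 0 :=
    (mul_eq_zero.mp (hcompl i)).imp le_of_eq le_of_eq
  have hdphi {a b : ℝ} (ha : 0 ≤ a) (h : a ≤ 0 ∨ b ≤ 0) : dphi r a b = 0 := by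
    rw [dphi_of_nonpos hr h, max_eq_right (by linarith), Real.zero_rpow (by linarith), neg_zero]
  have hs : (fun i => dphi r (x i) ((M *ᵥ x + q) i)) = 0 :=
    funext fun i => hdphi (hx i) (hsplit i)
  have ht : (fun i => dphi r ((M *ᵥ x + q) i) (x i)) = 0 :=
    funext fun i => hdphi (hv i) (hsplit i).symm
  rw [frGrad, hs, ht, zero_vecMul, add_zero]

lemma dphi_mul_dphi_eq_zero_of_frGrad_eq_zero (hr : 1 < r)
    (hpsd : ∀ x : Fin n → ℝ, 0 ≤ x ⬝ᵥ (M *ᵥ x)) {x : Fin n → ℝ} (hgrad : frGrad r M q x = 0)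
    (i : Fin n) : dphi r (x i) ((M *ᵥ x + q) i) * dphi r ((M *ᵥ x + q) i) (x i) = 0 := by
  set s : Fin n → ℝ := fun i => dphi r (x i) ((M *ᵥ x + q) i)
  set t : Fin n → ℝ := fun i => dphi r ((M *ᵥ x + q) i) (x i)
  have hnonneg (j : Fin n) : 0 ≤ s j * t j := dphi_mul_dphi_nonneg hr _ _
  have hsum : s ⬝ᵥ t + t ⬝ᵥ (M *ᵥ t) = 0 := by
    rw [dotProduct_mulVec, ← add_dotProduct]
    exact (congrArg (· ⬝ᵥ t) hgrad).trans (zero_dotProduct t)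
  refine (Finset.sum_eq_zero_iff_of_nonneg fun j _ => hnonneg j).mp ?_ i (Finset.mem_univ i)
  linarith [hpsd t, Finset.sum_nonneg fun j (_ : j ∈ Finset.univ) => hnonneg j,
    show s ⬝ᵥ t = ∑ j, s j * t j from rfl]

lemma nonneg_of_sum_max_neg_rpow_nonpos {ι : Type*} [Fintype ι] (hr : r ≠ 0) {a b : ι → ℝ}
    (h : ∑ i, (max (-a i) 0 ^ r + max (-b i) 0 ^ r) ≤ 0) (i : ι) : 0 ≤ a i ∧ 0 ≤ b i := by
  have ha (j : ι) : 0 ≤ max (-a j) 0 ^ r := by positivity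
  have hb (j : ι) : 0 ≤ max (-b j) 0 ^ r := by positivity
  have hzero := (Finset.sum_eq_zero_iff_of_nonneg fun j _ => add_nonneg (ha j) (hb j)).mp
    (le_antisymm h (Finset.sum_nonneg fun j _ => add_nonneg (ha j) (hb j))) i (Finset.mem_univ i)
  exact ⟨(max_neg_rpow_eq_zero_iff hr _).mp (by linarith [ha i, hb i]),
    (max_neg_rpow_eq_zero_iff hr _).mp (by linarith [ha i, hb i])⟩

lemma mem_solSet_of_frGrad_eq_zero (hr : 1 < r)
    (hpsd : ∀ x : Fin n → ℝ, 0 ≤ x ⬝ᵥ (M *ᵥ x)) {xb : Fin n → ℝ}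
    (hxb : xb ∈ feaSet M q) {x : Fin n → ℝ} (hgrad : frGrad r M q x = 0) :
    x ∈ solSet M q := by
  set v := M *ᵥ x + q
  set vb := M *ᵥ xb + q
  set s : Fin n → ℝ := fun i => dphi r (x i) (v i)
  set t : Fin n → ℝ := fun i => dphi r (v i) (x i)
  have hst := dphi_mul_dphi_eq_zero_of_frGrad_eq_zero hr hpsd hgrad
  have hsign (i : Fin n) : x i ≤ 0 ∨ v i ≤ 0 := nonpos_or_nonpos_of_dphi_mul_dphi_eq_zero hr (hst i)
  have hs (i : Fin n) : s i = -max (-x i) 0 ^ (r - 1) := dphi_of_nonpos hr (hsign i)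
  have ht (i : Fin n) : t i = -max (-v i) 0 ^ (r - 1) := dphi_of_nonpos hr (hsign i).symm
  have hbal : xb ⬝ᵥ s + vb ⬝ᵥ t = x ⬝ᵥ s + v ⬝ᵥ t := by
    have hM : vb - v = M *ᵥ (xb - x) := by
      rw [mulVec_sub]; simp only [vb, v]; abel
    have h0 : (xb - x) ⬝ᵥ s + (vb - v) ⬝ᵥ t = 0 := by
      rw [hM, dotProduct_comm _ t, dotProduct_mulVec, dotProduct_comm _ s, ← add_dotProduct]
      exact (congrArg (· ⬝ᵥ (xb - x)) hgrad).trans (zero_dotProduct _)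
    rw [sub_dotProduct, sub_dotProduct] at h0
    linarith
  have hfeas : xb ⬝ᵥ s + vb ⬝ᵥ t ≤ 0 :=
    add_nonpos (Finset.sum_nonpos fun i _ => mul_nonpos_of_nonneg_of_nonpos (hxb.1 i)
        (hs i ▸ neg_nonpos.mpr (by positivity)))
      (Finset.sum_nonpos fun i _ => mul_nonpos_of_nonneg_of_nonpos (hxb.2 i)
        (ht i ▸ neg_nonpos.mpr (by positivity)))
  have hneg : x ⬝ᵥ s + v ⬝ᵥ t = ∑ i, (max (-x i) 0 ^ r + max (-v i) 0 ^ r) := by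
    simp only [dotProduct, ← Finset.sum_add_distrib, hs, ht, mul_neg_max_neg_rpow hr]
  have hnonneg := nonneg_of_sum_max_neg_rpow_nonpos (by positivity) (a := x) (b := v) (by linarith)
  refine ⟨fun i => (hnonneg i).1, fun i => (hnonneg i).2, Finset.sum_eq_zero fun i _ => ?_⟩
  exact mul_eq_zero.mpr ((hsign i).imp (le_antisymm · (hnonneg i).1) (le_antisymm · (hnonneg i).2))

end Gradient

section StronglyMonotone

variable {n : ℕ}

lemma dotProduct_self_nonneg {ι : Type*} [Fintype ι] (v : ι → ℝ) : 0 ≤ v ⬝ᵥ v :=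
  Finset.sum_nonneg fun i _ => mul_self_nonneg (v i)

lemma mulVec_dotProduct_mulVec_le {ι κ : Type*} [Fintype ι] [Fintype κ] (A : Matrix ι κ ℝ)
    (d : κ → ℝ) :
    (A *ᵥ d) ⬝ᵥ (A *ᵥ d) ≤ (∑ i, ∑ j, A i j ^ 2) * (d ⬝ᵥ d) := by
  simp only [dotProduct, mulVec, ← pow_two]
  rw [Finset.sum_mul]
  exact Finset.sum_le_sum fun i _ => Finset.sum_mul_sq_le_sq_mul_sq _ _ _

lemma nonneg_and_nonneg_and_mul_eq_zero_of_max_sub_eq {γ a b : ℝ} (hγ : 0 < γ)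
    (h : max (a - γ * b) 0 = a) : 0 ≤ a ∧ 0 ≤ b ∧ a * b = 0 := by
  rcases max_cases (a - γ * b) 0 with ⟨h1, h2⟩ | ⟨h1, h2⟩
  · have hb : b = 0 := by nlinarith
    exact ⟨by linarith, hb.ge, by rw [hb, mul_zero]⟩
  · have ha : a = 0 := by linarith
    subst ha
    exact ⟨le_rfl, by nlinarith, zero_mul b⟩

noncomputable def projStep (γ : ℝ) (A : Matrix (Fin n) (Fin n) ℝ) (q y : Fin n → ℝ) :
    Fin n → ℝ :=
  fun i => max ((y - γ • (A *ᵥ y + q)) i) 0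

lemma mem_solSet_of_projStep_eq {γ : ℝ} (hγ : 0 < γ) {A : Matrix (Fin n) (Fin n) ℝ}
    {q y : Fin n → ℝ} (hy : projStep γ A q y = y) : y ∈ solSet A q := by
  have h (i : Fin n) := nonneg_and_nonneg_and_mul_eq_zero_of_max_sub_eq hγ (congrFun hy i)
  exact ⟨fun i => (h i).1, fun i => (h i).2.1, Finset.sum_eq_zero fun i _ => (h i).2.2⟩

lemma projStep_sub_dotProduct_le {γ ε L : ℝ} (hγ : 0 < γ) {A : Matrix (Fin n) (Fin n) ℝ}
    (hA : ∀ z : Fin n → ℝ, ε * (z ⬝ᵥ z) ≤ z ⬝ᵥ (A *ᵥ z))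
    (hL : ∀ z : Fin n → ℝ, (A *ᵥ z) ⬝ᵥ (A *ᵥ z) ≤ L * (z ⬝ᵥ z)) (q y z : Fin n → ℝ) :
    (projStep γ A q y - projStep γ A q z) ⬝ᵥ (projStep γ A q y - projStep γ A q z) ≤
      (1 - 2 * γ * ε + γ ^ 2 * L) * ((y - z) ⬝ᵥ (y - z)) := by
  set d := y - z
  -- the projection onto the nonnegative orthant is nonexpansive
  have hproj : (projStep γ A q y - projStep γ A q z) ⬝ᵥ (projStep γ A q y - projStep γ A q z) ≤
      (d - γ • (A *ᵥ d)) ⬝ᵥ (d - γ • (A *ᵥ d)) := by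
    have hlin : d - γ • (A *ᵥ d) = (y - γ • (A *ᵥ y + q)) - (z - γ • (A *ᵥ z + q)) := by
      simp only [d, mulVec_sub, smul_add, smul_sub]; abel
    rw [hlin]
    refine Finset.sum_le_sum fun i _ => ?_
    simp only [← pow_two, Pi.sub_apply, projStep]
    exact sq_le_sq.mpr (abs_max_sub_max_le_abs _ _ _)
  have hexpand : (d - γ • (A *ᵥ d)) ⬝ᵥ (d - γ • (A *ᵥ d)) =
      d ⬝ᵥ d - 2 * γ * (d ⬝ᵥ (A *ᵥ d)) + γ ^ 2 * ((A *ᵥ d) ⬝ᵥ (A *ᵥ d)) := by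
    simp only [sub_dotProduct, dotProduct_sub, smul_dotProduct, dotProduct_smul, smul_eq_mul,
      dotProduct_comm (A *ᵥ d) d]
    ring
  nlinarith [hA d, hL d]

lemma solSet_nonempty_of_strongly_monotone {ε : ℝ} (hε : 0 < ε) {A : Matrix (Fin n) (Fin n) ℝ}
    (hA : ∀ z : Fin n → ℝ, ε * (z ⬝ᵥ z) ≤ z ⬝ᵥ (A *ᵥ z)) (q : Fin n → ℝ) :
    (solSet A q).Nonempty := by
  set L := 1 + ∑ i, ∑ j, A i j ^ 2
  have hL : 0 < L := by positivity
  have hγ : 0 < ε / L := div_pos hε hL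
  set c := 1 - ε ^ 2 / L
  have hc : c < 1 := by simp only [c]; linarith [div_pos (pow_pos hε 2) hL]
  have hstep (y z : Fin n → ℝ) :
      (projStep (ε / L) A q y - projStep (ε / L) A q z) ⬝ᵥ
        (projStep (ε / L) A q y - projStep (ε / L) A q z) ≤ c * ((y - z) ⬝ᵥ (y - z)) := by
    refine (projStep_sub_dotProduct_le hγ hA (L := L) (fun d => ?_) q y z).trans_eq ?_
    · exact (mulVec_dotProduct_mulVec_le A d).trans (by nlinarith [dotProduct_self_nonneg d])
    · simp only [c]; field_simp; ring
  have hdist (u w : EuclideanSpace ℝ (Fin n)) :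
      dist u w = √((u.ofLp - w.ofLp) ⬝ᵥ (u.ofLp - w.ofLp)) := by
    simp only [EuclideanSpace.dist_eq, Real.dist_eq, dotProduct, Pi.sub_apply, pow_two,
      abs_mul_abs_self]
  let G (y : EuclideanSpace ℝ (Fin n)) : EuclideanSpace ℝ (Fin n) :=
    WithLp.toLp 2 (projStep (ε / L) A q y.ofLp)
  have hG : ContractingWith (√c).toNNReal G := by
    refine ⟨Real.toNNReal_lt_one.mpr ((Real.sqrt_lt' one_pos).mpr (by rwa [one_pow])), ?_⟩
    refine LipschitzWith.of_dist_le_mul fun y z => ?_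
    rw [hdist, hdist, Real.coe_toNNReal _ (Real.sqrt_nonneg c),
      ← Real.sqrt_mul' _ (dotProduct_self_nonneg _)]
    exact Real.sqrt_le_sqrt (hstep _ _)
  exact ⟨_, mem_solSet_of_projStep_eq hγ (congrArg WithLp.ofLp hG.fixedPoint_isFixedPt)⟩

end StronglyMonotone

section Existence

variable {n : ℕ} {M : Matrix (Fin n) (Fin n) ℝ} {q : Fin n → ℝ}

lemma norm_le_sqrt_dotProduct_self {ι : Type*} [Fintype ι] (v : ι → ℝ) : ‖v‖ ≤ √(v ⬝ᵥ v) :=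
  (pi_norm_le_iff_of_nonneg (Real.sqrt_nonneg _)).mpr fun i => by
    rw [Real.norm_eq_abs]
    exact Real.abs_le_sqrt (Finset.single_le_sum (f := fun j => v j * v j)
      (fun j _ => mul_self_nonneg (v j)) (Finset.mem_univ i) |>.trans_eq' (pow_two _).symm)

lemma dotProduct_self_le_of_sub_dotProduct_sub_nonpos {ι : Type*} [Fintype ι] {y a b : ι → ℝ}
    (h : (y - a) ⬝ᵥ (y - b) ≤ 0) : y ⬝ᵥ y ≤ a ⬝ᵥ a + b ⬝ᵥ b := by
  have hsq := dotProduct_self_nonneg (y - a - b)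
  simp only [sub_dotProduct, dotProduct_sub, dotProduct_comm b a, dotProduct_comm y a,
    dotProduct_comm y b] at h hsq
  linarith

lemma regularized_mulVec_add (ε : ℝ) (xb y : Fin n → ℝ) :
    (M + ε • 1) *ᵥ y + (q - ε • xb) = M *ᵥ y + q + ε • (y - xb) := by
  rw [add_mulVec, smul_mulVec, one_mulVec, smul_sub]
  abel

lemma smul_dotProduct_self_le_of_mem_solSet_regularized
    (hpsd : ∀ x : Fin n → ℝ, 0 ≤ x ⬝ᵥ (M *ᵥ x)) {xb : Fin n → ℝ}
    (hxb : xb ∈ feaSet M q) {ε : ℝ} {y : Fin n → ℝ} (hy : y ∈ solSet (M + ε • 1) (q - ε • xb)) :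
    ε * ((y - xb) ⬝ᵥ (y - xb)) ≤ xb ⬝ᵥ (M *ᵥ xb + q) := by
  obtain ⟨hy0, hw0, hyw⟩ := hy
  set w := (M + ε • 1) *ᵥ y + (q - ε • xb)
  have hw : w - (M *ᵥ xb + q) = M *ᵥ (y - xb) + ε • (y - xb) := by
    simp only [w, regularized_mulVec_add, mulVec_sub]; abel
  have hmono : (y - xb) ⬝ᵥ (w - (M *ᵥ xb + q)) ≤ xb ⬝ᵥ (M *ᵥ xb + q) := by
    have hyw' : y ⬝ᵥ w = 0 := hyw
    have h1 : 0 ≤ y ⬝ᵥ (M *ᵥ xb + q) := Finset.sum_nonneg fun i _ => mul_nonneg (hy0 i) (hxb.2 i)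
    have h2 : 0 ≤ xb ⬝ᵥ w := Finset.sum_nonneg fun i _ => mul_nonneg (hxb.1 i) (hw0 i)
    rw [sub_dotProduct, dotProduct_sub, dotProduct_sub]
    linarith
  rw [hw, dotProduct_add, dotProduct_smul, smul_eq_mul] at hmono
  linarith [hpsd (y - xb)]

lemma tendsto_smul_sub_of_mem_solSet_regularized
    (hpsd : ∀ x : Fin n → ℝ, 0 ≤ x ⬝ᵥ (M *ᵥ x)) {xb : Fin n → ℝ}
    (hxb : xb ∈ feaSet M q) {ι : Type*} {l : Filter ι} {ε : ι → ℝ} {y : ι → Fin n → ℝ}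
    (hε : ∀ k, 0 ≤ ε k) (hε0 : Tendsto ε l (𝓝 0))
    (hy : ∀ k, y k ∈ solSet (M + ε k • 1) (q - ε k • xb)) :
    Tendsto (fun k => ε k • (y k - xb)) l (𝓝 0) := by
  set C := xb ⬝ᵥ (M *ᵥ xb + q)
  have hbound (k : ι) : ‖ε k • (y k - xb)‖ ≤ √(ε k * C) := by
    refine (norm_le_sqrt_dotProduct_self _).trans (Real.sqrt_le_sqrt ?_)
    rw [smul_dotProduct, dotProduct_smul, smul_eq_mul, smul_eq_mul]
    exact mul_le_mul_of_nonneg_left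
      (smul_dotProduct_self_le_of_mem_solSet_regularized hpsd hxb (hy k)) (hε k)
  have hlim : Tendsto (fun k => √(ε k * C)) l (𝓝 0) := by
    simpa using ((hε0.mul_const C).sqrt)
  exact squeeze_zero_norm hbound hlim

lemma exists_supported_of_tendsto {ι : Type*} {l : Filter ι} [l.NeBot] (S : Finset (Fin n))
    {y r : ι → Fin n → ℝ} (hr : Tendsto r l (𝓝 0))
    (hy : ∀ᶠ k in l, (∀ i ∉ S, y k i = 0) ∧ ∀ i ∈ S, (M *ᵥ y k + q + r k) i = 0) :
    ∃ z : Fin n → ℝ, (∀ i ∉ S, z i = 0) ∧ ∀ i ∈ S, (M *ᵥ z + q) i = 0 := by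
  -- with `P` the coordinate projection onto `S`, the system reads `P M P z = -P q`, and the range
  -- of `P M P` is closed
  set P : Matrix (Fin n) (Fin n) ℝ := diagonal fun i => if i ∈ S then 1 else 0
  have hP (v : Fin n → ℝ) (i : Fin n) : (P *ᵥ v) i = if i ∈ S then v i else 0 := by
    simp [P, mulVec_diagonal]
  have hPsupp {v : Fin n → ℝ} (hv : ∀ i ∉ S, v i = 0) : P *ᵥ v = v := by
    ext i; rw [hP]; split_ifs with hi
    · rfl
    · exact (hv i hi).symm
  have hlim : Tendsto (fun k => (P * M * P).mulVecLin (y k)) l (𝓝 (-(P *ᵥ q))) := by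
    have hcont : Tendsto (fun k => -(P *ᵥ q) - P *ᵥ r k) l (𝓝 (-(P *ᵥ q) - P *ᵥ 0)) :=
      tendsto_const_nhds.sub ((continuous_const.matrix_mulVec continuous_id).tendsto 0 |>.comp hr)
    rw [mulVec_zero, sub_zero] at hcont
    refine hcont.congr' (hy.mono fun k hk => ?_)
    dsimp only
    rw [mulVecLin_apply, ← mulVec_mulVec, ← mulVec_mulVec, hPsupp hk.1]
    ext i
    rw [Pi.sub_apply, Pi.neg_apply, hP, hP, hP]
    split_ifs with hi
    · linarith [hk.2 i hi, show (M *ᵥ y k + q + r k) i = (M *ᵥ y k) i + q i + r k i from rfl]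
    · simp
  obtain ⟨z, hz⟩ : -(P *ᵥ q) ∈ LinearMap.range (P * M * P).mulVecLin :=
    (LinearMap.range _).closed_of_finiteDimensional.mem_of_tendsto hlim
      (Eventually.of_forall fun k => LinearMap.mem_range_self _ _)
  refine ⟨P *ᵥ z, fun i hi => by rw [hP, if_neg hi], fun i hi => ?_⟩
  have hzi := congrFun hz i
  rw [mulVecLin_apply, ← mulVec_mulVec, ← mulVec_mulVec, Pi.neg_apply, hP, hP, if_pos hi,
    if_pos hi] at hzi
  rw [Pi.add_apply, hzi, neg_add_cancel]

lemma eventually_dotProduct_self_le_of_support_eq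
    (hpsd : ∀ x : Fin n → ℝ, 0 ≤ x ⬝ᵥ (M *ᵥ x)) {xb : Fin n → ℝ} (hxb : xb ∈ feaSet M q)
    {ι : Type*} {l : Filter ι} [l.NeBot] {ε : ι → ℝ} {y : ι → Fin n → ℝ}
    (hε : ∀ k, 0 < ε k) (hε0 : Tendsto ε l (𝓝 0))
    (hy : ∀ k, y k ∈ solSet (M + ε k • 1) (q - ε k • xb)) {S : Finset (Fin n)}
    (hS : ∀ᶠ k in l, ∀ i, i ∈ S ↔ y k i ≠ 0) :
    ∃ R, ∀ᶠ k in l, y k ⬝ᵥ y k ≤ R := by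
  set r := fun k => ε k • (y k - xb)
  have hsupp : ∀ᶠ k in l, (∀ i ∉ S, y k i = 0) ∧ ∀ i ∈ S, (M *ᵥ y k + q + r k) i = 0 := by
    refine hS.mono fun k hk => ⟨fun i hi => not_not.mp ((hk i).not.mp hi), fun i hi => ?_⟩
    obtain ⟨hy0, hw0, hyw⟩ := hy k
    have hcompl : y k i * (M *ᵥ y k + q + r k) i = 0 := by
      rw [← regularized_mulVec_add]
      exact (Finset.sum_eq_zero_iff_of_nonneg fun j _ => mul_nonneg (hy0 j) (hw0 j)).mp hyw i
        (Finset.mem_univ i)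
    exact (mul_eq_zero.mp hcompl).resolve_left ((hk i).mp hi)
  obtain ⟨z, hz0, hzS⟩ := exists_supported_of_tendsto S
    (tendsto_smul_sub_of_mem_solSet_regularized hpsd hxb (fun k => (hε k).le) hε0 hy) hsupp
  -- `y k` and `z` vanish off `S`, so monotonicity of `M` gives `(y k - z) ⬝ (y k - xb) ≤ 0`
  refine ⟨z ⬝ᵥ z + xb ⬝ᵥ xb, hsupp.mono fun k hk => ?_⟩
  refine dotProduct_self_le_of_sub_dotProduct_sub_nonpos ?_
  have hkey : (y k - z) ⬝ᵥ (M *ᵥ (y k - z)) = -(ε k * ((y k - z) ⬝ᵥ (y k - xb))) := by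
    rw [← smul_eq_mul, ← dotProduct_smul, ← dotProduct_neg]
    refine Finset.sum_congr rfl fun i _ => ?_
    by_cases hi : i ∈ S
    · have h1 := hk.2 i hi
      have h2 := hzS i hi
      simp only [Pi.add_apply, mulVec_sub, Pi.sub_apply, Pi.neg_apply, Pi.smul_apply,
        smul_eq_mul, r] at h1 h2 ⊢
      rw [show (M *ᵥ y k) i - (M *ᵥ z) i = -(ε k * (y k i - xb i)) by linarith]
    · simp only [Pi.sub_apply, hk.1 i hi, hz0 i hi, sub_zero, zero_mul]
  nlinarith [hpsd (y k - z), hε k]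

lemma isClosed_setOf_mem_solSet_regularized (xb : Fin n → ℝ) :
    IsClosed {p : ℝ × (Fin n → ℝ) | p.2 ∈ solSet (M + p.1 • 1) (q - p.1 • xb)} := by
  let w (p : ℝ × (Fin n → ℝ)) : Fin n → ℝ := (M + p.1 • 1) *ᵥ p.2 + (q - p.1 • xb)
  have hw : Continuous w := by
    simp only [w, regularized_mulVec_add]
    fun_prop
  have hcoord (i : Fin n) : Continuous fun p : ℝ × (Fin n → ℝ) => p.2 i :=
    (continuous_apply i).comp continuous_snd
  have hsets : {p : ℝ × (Fin n → ℝ) | p.2 ∈ solSet (M + p.1 • 1) (q - p.1 • xb)} =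
      {p | ∀ i, 0 ≤ p.2 i} ∩ ({p | ∀ i, 0 ≤ w p i} ∩ {p | ∑ i, p.2 i * w p i = 0}) := rfl
  rw [hsets, Set.ofPred_forall, Set.ofPred_forall]
  refine (isClosed_iInter fun i => isClosed_le continuous_const (hcoord i)).inter
    ((isClosed_iInter fun i => isClosed_le continuous_const ((continuous_apply i).comp hw)).inter
      (isClosed_eq ?_ continuous_const))
  exact continuous_finsetSum _ fun i _ => (hcoord i).mul ((continuous_apply i).comp hw)

theorem solSet_nonempty_of_feaSet_nonempty (hpsd : ∀ x : Fin n → ℝ, 0 ≤ x ⬝ᵥ (M *ᵥ x))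
    (hfea : (feaSet M q).Nonempty) : (solSet M q).Nonempty := by
  obtain ⟨xb, hxb⟩ := hfea
  set ε : ℕ → ℝ := fun k => 1 / (k + 1)
  have hε (k : ℕ) : 0 < ε k := by positivity
  have hreg (k : ℕ) : (solSet (M + ε k • 1) (q - ε k • xb)).Nonempty := by
    refine solSet_nonempty_of_strongly_monotone (hε k) (fun z => ?_) _
    rw [add_mulVec, dotProduct_add, smul_mulVec, one_mulVec, dotProduct_smul, smul_eq_mul]
    linarith [hpsd z]
  choose y hy using hreg
  -- an ultrafilter finer than `atTop` replaces the successive extraction of subsequences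
  set U := hyperfilter ℕ
  have hε0 : Tendsto ε U (𝓝 0) :=
    tendsto_one_div_add_atTop_nhds_zero_nat.mono_left Nat.hyperfilter_le_atTop
  obtain ⟨S, hS⟩ := Ultrafilter.eventually_exists_iff.mp
    (Eventually.of_forall fun k => ⟨Finset.univ.filter fun i => y k i ≠ 0, rfl⟩ :
      ∀ᶠ k in (U : Filter ℕ), ∃ S : Finset (Fin n), S = Finset.univ.filter fun i => y k i ≠ 0)
  obtain ⟨R, hR⟩ := eventually_dotProduct_self_le_of_support_eq hpsd hxb hε hε0 hy
    (S := S) (hS.mono fun k hk i => by simp [hk])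
  obtain ⟨x, -, hx⟩ := (isCompact_closedBall (0 : Fin n → ℝ) √R).ultrafilter_le_nhds' (U.map y)
    (hR.mono fun k hk => mem_closedBall_zero_iff.mpr
      ((norm_le_sqrt_dotProduct_self _).trans (Real.sqrt_le_sqrt hk)))
  have hlim : Tendsto (fun k => (ε k, y k)) U (𝓝 (0, x)) := hε0.prodMk_nhds hx
  have hmem := (isClosed_setOf_mem_solSet_regularized xb).mem_of_tendsto hlim
    (Eventually.of_forall hy)
  simp only [Set.mem_ofPred_eq, zero_smul, add_zero, sub_zero] at hmem
  exact ⟨x, hmem⟩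

end Existence

theorem stmt_12 {n : ℕ} (r : ℝ) (hr : 2 ≤ r) (M : Matrix (Fin n) (Fin n) ℝ)
    (q : Fin n → ℝ) (hpsd : ∀ x : Fin n → ℝ, 0 ≤ ∑ i, x i * M.mulVec x i)
    (hfea : (feaSet M q).Nonempty) :
    {x : Fin n → ℝ | fderiv ℝ (fr r M q) x = 0} = solSet M q ∧
    (solSet M q).Nonempty := by
  have hr1 : 1 < r := by linarith
  refine ⟨Set.ext fun x => ?_, solSet_nonempty_of_feaSet_nonempty hpsd hfea⟩
  obtain ⟨xb, hxb⟩ := hfea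
  rw [Set.mem_ofPred_eq, fderiv_fr_eq_zero_iff hr1]
  exact ⟨mem_solSet_of_frGrad_eq_zero hr1 hpsd hxb, frGrad_eq_zero_of_mem_solSet hr1⟩
end

section
/- If M is a P_s-matrix, then for every γ ≥ 0 the level set L_s(f_r, γ) = {x : ‖x‖₀ ≤ s, f_r(x) ≤ γ} is bounded. -/
/-!
On the level set every summand of `f_r` is at most `γ`; this bounds `xᵢ` and `(Mx + q)ᵢ` from
below and `xᵢ (Mx + q)ᵢ` from above by constants. Hence for large `x` the direction
`d = x / ‖x‖` solves the homogeneous LCP `d ≥ 0, Md ≥ 0, dᵢ (Md)ᵢ ≤ 0` up to an error of order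
`1 / ‖x‖`. A P_s-matrix admits no nonzero `s`-sparse solution of that problem (the principal
submatrix on the support of `d` would be singular), so by compactness of the `s`-sparse unit
vectors the error is bounded below by some `ε > 0`, which bounds `‖x‖`.
-/

open Matrix

open Filter Topology

section

variable {n : ℕ}

theorem zeroNorm_smul {c : ℝ} (hc : c ≠ 0) (x : Fin n → ℝ) : zeroNorm (c • x) = zeroNorm x := by
  simp [zeroNorm, hc]

theorem isClosed_setOf_zeroNorm_le (s : ℕ) : IsClosed {x : Fin n → ℝ | zeroNorm x ≤ s} := by
  rw [← isOpen_compl_iff, isOpen_iff_mem_nhds]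
  intro x hx
  rw [Set.mem_compl_iff, Set.mem_ofPred_eq, not_le] at hx
  have hsupp : ∀ᶠ y in 𝓝 x, ∀ i, x i ≠ 0 → y i ≠ 0 := eventually_all.2 fun i => by
    by_cases hi : x i = 0
    · exact .of_forall fun _ h => absurd hi h
    · exact ((continuous_apply i).continuousAt.eventually_ne hi).mono fun _ h _ => h
  filter_upwards [hsupp] with y hy
  refine not_le.2 (hx.trans_le (Finset.card_le_card fun i hi => ?_))
  simp only [Finset.mem_filter, Finset.mem_univ, true_and] at hi ⊢
  exact hy i hi

theorem IsPsMatrix.eq_zero_of_mulVec_eq_zero_on_support {s : ℕ} {M : Matrix (Fin n) (Fin n) ℝ}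
    (hP : IsPsMatrix s M) {d : Fin n → ℝ} (hd : zeroNorm d ≤ s)
    (hMd : ∀ i, d i ≠ 0 → (M *ᵥ d) i = 0) : d = 0 := by
  by_contra hne
  set T := Finset.univ.filter (fun i => d i ≠ 0)
  have hT : T.Nonempty := by
    obtain ⟨i, hi⟩ := Function.ne_iff.1 hne
    exact ⟨i, by simpa [T] using hi⟩
  refine (hP T hT hd).ne' (exists_mulVec_eq_zero_iff.1 ⟨fun i => d i, ?_, ?_⟩)
  · obtain ⟨i, hi⟩ := hT
    exact fun h => (Finset.mem_filter.1 hi).2 (congrFun h ⟨i, hi⟩)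
  · funext j
    have hsum : ∑ i : T, M j i * d i = (M *ᵥ d) j := by
      rw [Finset.sum_coe_sort T fun i => M j i * d i]
      exact Finset.sum_filter_of_ne fun i _ h => right_ne_zero_of_mul h
    simp only [mulVec, dotProduct, submatrix_apply, Pi.zero_apply]
    rw [hsum]
    exact hMd j (Finset.mem_filter.1 j.2).2

noncomputable def lcpResidual (M : Matrix (Fin n) (Fin n) ℝ) (d : Fin n → ℝ) : ℝ :=
  ∑ i, (max (-d i) 0 + max (-(M *ᵥ d) i) 0 + max (d i * (M *ᵥ d) i) 0)

theorem continuous_lcpResidual (M : Matrix (Fin n) (Fin n) ℝ) : Continuous (lcpResidual M) := by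
  unfold lcpResidual; fun_prop

theorem IsPsMatrix.lcpResidual_pos {s : ℕ} {M : Matrix (Fin n) (Fin n) ℝ} (hP : IsPsMatrix s M)
    {d : Fin n → ℝ} (hd0 : d ≠ 0) (hd : zeroNorm d ≤ s) : 0 < lcpResidual M d := by
  refine lt_of_not_ge fun hle => hd0 (hP.eq_zero_of_mulVec_eq_zero_on_support hd fun i hi => ?_)
  have hterms := (Finset.sum_eq_zero_iff_of_nonneg (fun i _ => by positivity)).1
    (hle.antisymm (Finset.sum_nonneg fun i _ => by positivity)) i (Finset.mem_univ i)
  obtain ⟨hd_nonneg, hMd_nonneg, hcompl⟩ :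
      0 ≤ d i ∧ 0 ≤ (M *ᵥ d) i ∧ d i * (M *ᵥ d) i ≤ 0 := by
    have := le_max_right (-d i) 0
    have := le_max_right (-(M *ᵥ d) i) 0
    have := le_max_right (d i * (M *ᵥ d) i) 0
    refine ⟨?_, ?_, ?_⟩ <;> linarith [le_max_left (-d i) 0, le_max_left (-(M *ᵥ d) i) 0,
      le_max_left (d i * (M *ᵥ d) i) 0]
  nlinarith [lt_of_le_of_ne hd_nonneg (Ne.symm hi)]

theorem IsPsMatrix.exists_pos_le_lcpResidual {s : ℕ} {M : Matrix (Fin n) (Fin n) ℝ}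
    (hP : IsPsMatrix s M) :
    ∃ ε > 0, ∀ d : Fin n → ℝ, ‖d‖ = 1 → zeroNorm d ≤ s → ε ≤ lcpResidual M d := by
  have hK : IsCompact (Metric.sphere (0 : Fin n → ℝ) 1 ∩ {d | zeroNorm d ≤ s}) :=
    (isCompact_sphere 0 1).inter_right (isClosed_setOf_zeroNorm_le s)
  obtain ⟨ε, hε, hmin⟩ := hK.exists_forall_le' (continuous_lcpResidual M).continuousOn
    fun d ⟨hd1, hds⟩ => hP.lcpResidual_pos (ne_zero_of_mem_unit_sphere ⟨d, hd1⟩) hds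
  exact ⟨ε, hε, fun d hd1 hds => hmin d ⟨by simpa using hd1, hds⟩⟩

theorem le_max_one_rpow {a r : ℝ} (hr : 1 ≤ r) : a ≤ max 1 (a ^ r) := by
  rcases le_or_gt a 1 with h | h
  · exact le_max_of_le_left h
  · exact le_max_of_le_right (by simpa using Real.rpow_le_rpow_of_exponent_le h.le hr)

theorem phi_nonneg {r : ℝ} (hr : 0 ≤ r) (a b : ℝ) : 0 ≤ phi r a b := by
  unfold phi; positivity

theorem phi_le_fr {r : ℝ} (hr : 0 ≤ r) (M : Matrix (Fin n) (Fin n) ℝ) (q x : Fin n → ℝ)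
    (i : Fin n) : phi r (x i) ((M *ᵥ x) i + q i) ≤ fr r M q x :=
  Finset.single_le_sum (f := fun i => phi r (x i) ((M *ᵥ x) i + q i))
    (fun _ _ => phi_nonneg hr _ _) (Finset.mem_univ i)

theorem bounds_of_phi_le {r a b γ : ℝ} (hr : 1 ≤ r) (h : phi r a b ≤ γ) :
    -a ≤ max 1 (r * γ) ∧ -b ≤ max 1 (r * γ) ∧ a * b ≤ max 1 (r * γ) + max 1 (r * γ) ^ 2 := by
  set c := max 1 (r * γ)
  rw [phi, one_div, inv_mul_le_iff₀ (by positivity)] at h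
  have hpow : ∀ u, u ^ r ≤ r * γ → u ≤ c := fun u hur =>
    (le_max_one_rpow hr).trans (max_le_max le_rfl hur)
  have hnonneg : ∀ u : ℝ, 0 ≤ max u 0 ^ r := fun u => by positivity
  have hprod := mul_nonneg (hnonneg a) (hnonneg b)
  have hneg_a := hpow (max (-a) 0) (by linarith [hnonneg (-b)])
  have hneg_b := hpow (max (-b) 0) (by linarith [hnonneg (-a)])
  have hpos_ab := hpow (max a 0 * max b 0) (by
    rw [Real.mul_rpow (le_max_right _ _) (le_max_right _ _)]
    linarith [hnonneg (-a), hnonneg (-b)])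
  have hsplit : a * b ≤ max a 0 * max b 0 + max (-a) 0 * max (-b) 0 := by
    rcases le_total a 0 with ha | ha <;> rcases le_total b 0 with hb | hb <;>
      simp [ha, hb] <;> nlinarith
  refine ⟨(le_max_left _ _).trans hneg_a, (le_max_left _ _).trans hneg_b, ?_⟩
  nlinarith [mul_le_mul hneg_a hneg_b (le_max_right _ _) (zero_le_one.trans (le_max_left 1 _)),
    le_max_right (-a) 0, le_max_right (-b) 0]

-- The `i`-th summand of `lcpResidual M (‖x‖⁻¹ • x)`: `a = xᵢ`, `m = (Mx)ᵢ`, `p = qᵢ`, `t = ‖x‖`.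
theorem scaled_residual_terms_le {a m p c Q t : ℝ} (hc : 0 ≤ c) (ht : 1 ≤ t) (hat : |a| ≤ t)
    (hp : |p| ≤ Q) (ha : -a ≤ c) (hb : -(m + p) ≤ c) (hab : a * (m + p) ≤ c + c ^ 2) :
    max (-(t⁻¹ * a)) 0 + max (-(t⁻¹ * m)) 0 + max (t⁻¹ * a * (t⁻¹ * m)) 0 ≤
      3 * (c + c ^ 2 + Q) / t := by
  have ht0 : 0 < t := zero_lt_one.trans_le ht
  have hQ : 0 ≤ Q := (abs_nonneg p).trans hp
  have hC : 0 ≤ (c + c ^ 2 + Q) / t := by positivity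
  have hap : -(a * p) ≤ t * Q := (neg_le_abs _).trans
    (by rw [abs_mul]; exact mul_le_mul hat hp (abs_nonneg _) ht0.le)
  have h1 : -(t⁻¹ * a) ≤ (c + c ^ 2 + Q) / t := by
    rw [← mul_neg, inv_mul_le_iff₀ ht0, mul_div_cancel₀ _ ht0.ne']; nlinarith
  have h2 : -(t⁻¹ * m) ≤ (c + c ^ 2 + Q) / t := by
    rw [← mul_neg, inv_mul_le_iff₀ ht0, mul_div_cancel₀ _ ht0.ne']
    nlinarith [le_abs_self p, neg_abs_le p]
  have h3 : t⁻¹ * a * (t⁻¹ * m) ≤ (c + c ^ 2 + Q) / t := by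
    rw [show t⁻¹ * a * (t⁻¹ * m) = t⁻¹ * (t⁻¹ * (a * m)) by ring, inv_mul_le_iff₀ ht0,
      mul_div_cancel₀ _ ht0.ne', inv_mul_le_iff₀ ht0]
    nlinarith
  rw [mul_div_assoc]
  linarith [max_le h1 hC, max_le h2 hC, max_le h3 hC]

theorem lcpResidual_inv_norm_smul_le {r γ : ℝ} (hr : 1 ≤ r) {M : Matrix (Fin n) (Fin n) ℝ}
    {q x : Fin n → ℝ} (hx : fr r M q x ≤ γ) (hx1 : 1 ≤ ‖x‖) :
    lcpResidual M (‖x‖⁻¹ • x) ≤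
      n * (3 * (max 1 (r * γ) + max 1 (r * γ) ^ 2 + ‖q‖) / ‖x‖) := by
  unfold lcpResidual
  simp only [mulVec_smul, Pi.smul_apply, smul_eq_mul]
  calc _ ≤ ∑ _i : Fin n, 3 * (max 1 (r * γ) + max 1 (r * γ) ^ 2 + ‖q‖) / ‖x‖ :=
        Finset.sum_le_sum fun i _ => by
          obtain ⟨ha, hb, hab⟩ := bounds_of_phi_le hr ((phi_le_fr (by linarith) M q x i).trans hx)
          exact scaled_residual_terms_le (zero_le_one.trans (le_max_left _ _)) hx1
            (norm_le_pi_norm x i) (norm_le_pi_norm q i) ha hb hab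
    _ = _ := by simp

end

theorem stmt_16_general {n : ℕ} (s : ℕ)
    (r : ℝ) (hr : 2 ≤ r) (M : Matrix (Fin n) (Fin n) ℝ) (hP : IsPsMatrix s M)
    (q : Fin n → ℝ) (γ : ℝ) :
    Bornology.IsBounded {x : Fin n → ℝ | zeroNorm x ≤ s ∧ fr r M q x ≤ γ} := by
  obtain ⟨ε, hε, hres⟩ := hP.exists_pos_le_lcpResidual
  set C := 3 * (max 1 (r * γ) + max 1 (r * γ) ^ 2 + ‖q‖)
  rw [isBounded_iff_forall_norm_le]
  refine ⟨max 1 (n * C / ε), fun x ⟨hxs, hxγ⟩ => ?_⟩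
  rcases le_or_gt ‖x‖ 1 with hx1 | hx1
  · exact le_max_of_le_left hx1
  have hx0 : ‖x‖ ≠ 0 := by positivity
  have hunit : ‖‖x‖⁻¹ • x‖ = 1 := by rw [norm_smul, norm_inv, norm_norm, inv_mul_cancel₀ hx0]
  have hε_le := (hres _ hunit ((zeroNorm_smul (inv_ne_zero hx0) x).trans_le hxs)).trans
    (lcpResidual_inv_norm_smul_le (by linarith) hxγ hx1.le)
  rw [mul_div_assoc', le_div_iff₀ (by positivity)] at hε_le
  exact le_max_of_le_right (by rw [le_div_iff₀ hε]; linarith)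

theorem stmt_16 {n : ℕ} (s : ℕ) (hs : 0 < s) (hsn : s ≤ n)
    (r : ℝ) (hr : 2 ≤ r) (M : Matrix (Fin n) (Fin n) ℝ) (hP : IsPsMatrix s M)
    (q : Fin n → ℝ) (γ : ℝ) (hγ : 0 ≤ γ) :
    Bornology.IsBounded {x : Fin n → ℝ | zeroNorm x ≤ s ∧ fr r M q x ≤ γ} :=
  stmt_16_general s r hr M hP q γ
end
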